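/- Let X be a finite simple graph on n vertices with at least one edge, with minimal degree δ, maximal degree Δ, and largest Laplacian eigenvalue λ = λ_max. Let α' be the independence number of the derived graph X'. Then the independence number α of X satisfies α ≤ (n/2)·(1 − Δ/λ + sqrt((1 − Δ/λ)² + 4α'(Δ − δ)/(nλ))). -/

import Mathlib

/-!
Let `S` be a maximum independent set, `|S| = α`. The test vector `n • 𝟙_S - α • 𝟙` has Laplacian
quadratic form `n² ∑_{v ∈ S} deg v` (every edge at `S` leaves `S`) and squared norm `n α (n - α)`,
so the Rayleigh bound gives `n ∑_{v ∈ S} deg v ≤ λ α (n - α)`. The vertices of `S` of non-maximal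
degree are independent in `X'`, hence `∑_{v ∈ S} deg v ≥ Δ α - (Δ - δ) α'`. Together these say that
`α / n` satisfies a quadratic inequality whose larger root is the stated bound.
-/

open Finset

/-- The independence number: the largest size of a set of pairwise non-adjacent vertices. -/
noncomputable def indepNum {V : Type*} (G : SimpleGraph V) : ℕ :=
  sSup {n | ∃ s : Finset V, (∀ v ∈ s, ∀ w ∈ s, ¬ G.Adj v w) ∧ s.card = n}

/-- The degree of a vertex: the number of its neighbours. -/
noncomputable def deg {V : Type*} (G : SimpleGraph V) (v : V) : ℕ :=
  (G.neighborSet v).ncard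

/-- The minimal degree. -/
noncomputable def minDeg {V : Type*} (G : SimpleGraph V) : ℕ :=
  sInf (Set.range (deg G))

/-- The maximal degree. -/
noncomputable def maxDeg {V : Type*} (G : SimpleGraph V) : ℕ :=
  sSup (Set.range (deg G))

/-- The largest eigenvalue of the Laplacian matrix `L = D - A`. -/
noncomputable def lapMax {V : Type*} [Fintype V] (G : SimpleGraph V) : ℝ :=
  letI := Classical.decEq V
  letI := Classical.decRel G.Adj
  ⨆ i, (SimpleGraph.posSemidef_lapMatrix ℝ G).1.eigenvalues i

/-- The derived graph: the induced subgraph on the vertices of non-maximal degree. -/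
noncomputable def derived {V : Type*} (G : SimpleGraph V) :
    SimpleGraph {v : V | deg G v < maxDeg G} :=
  G.induce {v : V | deg G v < maxDeg G}

open Matrix
open scoped MatrixOrder

theorem Matrix.IsHermitian.dotProduct_mulVec_le_iSup_eigenvalues_mul {n : Type*} [Fintype n]
    [DecidableEq n] {A : Matrix n n ℝ} (hA : A.IsHermitian) (x : n → ℝ) :
    x ⬝ᵥ (A *ᵥ x) ≤ (⨆ i, hA.eigenvalues i) * (x ⬝ᵥ x) := by
  have hle : A ≤ algebraMap ℝ (Matrix n n ℝ) (⨆ i, hA.eigenvalues i) := by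
    refine le_algebraMap_of_spectrum_le fun r hr ↦ ?_
    rw [hA.spectrum_real_eq_range_eigenvalues] at hr
    obtain ⟨i, rfl⟩ := hr
    exact le_ciSup (Set.finite_range _).bddAbove i
  simpa [sub_mulVec, dotProduct_sub, Algebra.algebraMap_eq_smul_one, smul_mulVec,
    dotProduct_smul] using (le_iff.mp hle).dotProduct_mulVec_nonneg x

namespace SimpleGraph

variable {V : Type*} (G : SimpleGraph V)

theorem lapMatrix_dotProduct_add_const [Fintype V] [DecidableEq V] [DecidableRel G.Adj]
    (x : V → ℝ) (d : ℝ) :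
    (x + fun _ ↦ d) ⬝ᵥ (G.lapMatrix ℝ *ᵥ (x + fun _ ↦ d)) = x ⬝ᵥ (G.lapMatrix ℝ *ᵥ x) := by
  simp only [← toLinearMap₂'_apply', lapMatrix_toLinearMap₂', Pi.add_apply,
    add_sub_add_right_eq_sub]

theorem lapMatrix_dotProduct_indicator [Fintype V] [DecidableEq V] [DecidableRel G.Adj]
    {S : Finset V} (hS : ∀ v ∈ S, ∀ w ∈ S, ¬ G.Adj v w) :
    (fun v ↦ if v ∈ S then 1 else 0) ⬝ᵥ (G.lapMatrix ℝ *ᵥ fun v ↦ if v ∈ S then 1 else 0)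
      = ∑ v ∈ S, (G.degree v : ℝ) := by
  simp only [dotProduct, lapMatrix_mulVec_apply, ite_mul, one_mul, zero_mul, sum_ite_mem,
    univ_inter]
  refine sum_congr rfl fun v hv ↦ ?_
  have hN : Disjoint (G.neighborFinset v) S := Finset.disjoint_left.mpr fun _ hu huS ↦
    hS v hv _ huS ((G.mem_neighborFinset v _).mp hu)
  simp [hv, disjoint_iff_inter_eq_empty.mp hN]

end SimpleGraph

section

variable {V : Type*} (G : SimpleGraph V)

theorem deg_eq_degree (v : V) [Fintype (G.neighborSet v)] : deg G v = G.degree v := by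
  rw [deg, Set.ncard_eq_toFinset_card', ← G.card_neighborSet_eq_degree, Set.toFinset_card]

theorem minDeg_le_deg (v : V) : minDeg G ≤ deg G v :=
  Nat.sInf_le ⟨v, rfl⟩

theorem card_mul_sum_deg_le_lapMax [Fintype V] [Nonempty V] {S : Finset V}
    (hS : ∀ v ∈ S, ∀ w ∈ S, ¬ G.Adj v w) :
    (Fintype.card V : ℝ) * ∑ v ∈ S, (deg G v : ℝ)
      ≤ lapMax G * (#S * (Fintype.card V - #S)) := by
  classical
  set n : ℝ := (Fintype.card V : ℝ)
  set s : ℝ := (#S : ℝ)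
  set x : V → ℝ := fun v ↦ if v ∈ S then n - s else -s
  have hx : x = n • (fun v ↦ if v ∈ S then 1 else 0) + fun _ ↦ -s := by
    ext v
    by_cases hv : v ∈ S <;> simp [x, hv, sub_eq_add_neg]
  have hquad : x ⬝ᵥ (G.lapMatrix ℝ *ᵥ x) = n ^ 2 * ∑ v ∈ S, (deg G v : ℝ) := by
    rw [hx, G.lapMatrix_dotProduct_add_const, mulVec_smul, dotProduct_smul, smul_dotProduct,
      G.lapMatrix_dotProduct_indicator hS]
    simp only [deg_eq_degree, smul_eq_mul]
    ring
  have hnorm : x ⬝ᵥ x = n * (s * (n - s)) := by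
    rw [dotProduct, ← sum_add_sum_compl S]
    rw [sum_congr rfl fun v (hv : v ∈ S) ↦ show x v * x v = (n - s) ^ 2 by simp [x, hv, sq],
      sum_congr rfl fun v (hv : v ∈ Sᶜ) ↦ show x v * x v = s ^ 2 by
        simp [x, (mem_compl.mp hv), sq]]
    simp only [sum_const, card_compl, nsmul_eq_mul, Nat.cast_sub (card_le_univ S)]
    ring
  have hray := (G.posSemidef_lapMatrix ℝ).1.dotProduct_mulVec_le_iSup_eigenvalues_mul x
  rw [hquad, hnorm, sq, mul_assoc, mul_left_comm _ n (s * (n - s))] at hray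
  exact le_of_mul_le_mul_left hray (Nat.cast_pos.mpr Fintype.card_pos)

theorem lapMax_pos [Fintype V] (hne : ∃ v w, G.Adj v w) : 0 < lapMax G := by
  obtain ⟨v, w, hvw⟩ := hne
  have : Nonempty V := ⟨v⟩
  have hcut := card_mul_sum_deg_le_lapMax G (S := {v}) (by simp)
  have hdeg : 0 < deg G v := Set.ncard_pos (Set.toFinite _) |>.mpr ⟨w, hvw⟩
  simp only [sum_singleton, card_singleton, Nat.cast_one, one_mul] at hcut
  have hn : (1 : ℝ) ≤ Fintype.card V := by exact_mod_cast Fintype.card_pos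
  by_contra! hlam
  nlinarith [mul_nonpos_of_nonpos_of_nonneg hlam (sub_nonneg.mpr hn),
    (Nat.cast_pos (α := ℝ)).mpr hdeg]

variable [Finite V]

theorem deg_le_maxDeg (v : V) : deg G v ≤ maxDeg G :=
  le_csSup (Set.finite_range _).bddAbove ⟨v, rfl⟩

theorem card_le_indepNum {S : Finset V} (hS : ∀ v ∈ S, ∀ w ∈ S, ¬ G.Adj v w) :
    #S ≤ indepNum G := by
  have := Fintype.ofFinite V
  exact le_csSup ⟨Fintype.card V, fun _ ⟨T, _, hT⟩ ↦ hT ▸ card_le_univ T⟩ ⟨S, hS, rfl⟩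

theorem exists_card_eq_indepNum :
    ∃ S : Finset V, (∀ v ∈ S, ∀ w ∈ S, ¬ G.Adj v w) ∧ #S = indepNum G := by
  have := Fintype.ofFinite V
  exact Nat.sSup_mem (s := {n | ∃ S : Finset V, (∀ v ∈ S, ∀ w ∈ S, ¬ G.Adj v w) ∧ #S = n})
    ⟨0, ∅, by simp, rfl⟩ ⟨Fintype.card V, fun _ ⟨T, _, hT⟩ ↦ hT ▸ card_le_univ T⟩

theorem card_filter_le_indepNum_induce (s : Set V) [DecidablePred (· ∈ s)] {S : Finset V}
    (hS : ∀ v ∈ S, ∀ w ∈ S, ¬ G.Adj v w) : #(S.filter (· ∈ s)) ≤ indepNum (G.induce s) := by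
  rw [← card_subtype]
  exact card_le_indepNum (G.induce s) fun v hv w hw ↦ hS v (mem_subtype.mp hv) w (mem_subtype.mp hw)

theorem maxDeg_mul_card_sub_le_sum_deg [Nonempty V] {S : Finset V}
    (hS : ∀ v ∈ S, ∀ w ∈ S, ¬ G.Adj v w) :
    (maxDeg G : ℝ) * #S - ((maxDeg G : ℝ) - minDeg G) * indepNum (derived G)
      ≤ ∑ v ∈ S, (deg G v : ℝ) := by
  classical
  obtain ⟨v₀⟩ := ‹Nonempty V›
  set Δ : ℝ := (maxDeg G : ℝ)
  set δ : ℝ := (minDeg G : ℝ)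
  have hδΔ : δ ≤ Δ := Nat.cast_le.mpr ((minDeg_le_deg G v₀).trans (deg_le_maxDeg G v₀))
  have hlow : (#(S.filter (deg G · < maxDeg G)) : ℝ) ≤ indepNum (derived G) := by
    exact_mod_cast card_filter_le_indepNum_induce G {v | deg G v < maxDeg G} hS
  calc Δ * #S - (Δ - δ) * indepNum (derived G)
      ≤ Δ * #S - (Δ - δ) * #(S.filter (deg G · < maxDeg G)) := by gcongr
    _ = ∑ v ∈ S, (Δ - if deg G v < maxDeg G then Δ - δ else 0) := by
        rw [sum_sub_distrib, sum_ite, sum_const_zero, add_zero, sum_const, sum_const]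
        simp only [nsmul_eq_mul]
        ring
    _ ≤ ∑ v ∈ S, (deg G v : ℝ) := by
        refine sum_le_sum fun v _ ↦ ?_
        split_ifs with h
        · simpa [δ] using (Nat.cast_le (α := ℝ)).mpr (minDeg_le_deg G v)
        · simpa [Δ] using (Nat.cast_le (α := ℝ)).mpr (not_lt.mp h)

end

theorem le_add_sqrt_div_two_of_sq_le_mul_add {a b c : ℝ} (h : a ^ 2 ≤ b * a + c) :
    a ≤ (b + √(b ^ 2 + 4 * c)) / 2 := by
  have : |2 * a - b| ≤ √(b ^ 2 + 4 * c) := Real.abs_le_sqrt (by nlinarith)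
  linarith [le_abs_self (2 * a - b)]

theorem le_half_mul_of_mul_sub_le_mul_mul_sub {a a' n lam Δ δ : ℝ} (hn : 0 < n) (hlam : 0 < lam)
    (h : n * (Δ * a - (Δ - δ) * a') ≤ lam * (a * (n - a))) :
    a ≤ n / 2 * (1 - Δ / lam + √((1 - Δ / lam) ^ 2 + 4 * a' * (Δ - δ) / (n * lam))) := by
  have hgap : (1 - Δ / lam) * (a / n) + a' * (Δ - δ) / (n * lam) - (a / n) ^ 2
      = (lam * (a * (n - a)) - n * (Δ * a - (Δ - δ) * a')) / (n ^ 2 * lam) := by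
    field_simp
    ring
  have hq : (a / n) ^ 2 ≤ (1 - Δ / lam) * (a / n) + a' * (Δ - δ) / (n * lam) := by
    rw [← sub_nonneg, hgap]
    exact div_nonneg (sub_nonneg.mpr h) (by positivity)
  have hroot := le_add_sqrt_div_two_of_sq_le_mul_add hq
  rw [show 4 * (a' * (Δ - δ) / (n * lam)) = 4 * a' * (Δ - δ) / (n * lam) by ring] at hroot
  have hscaled := mul_le_mul_of_nonneg_left hroot hn.le
  rw [mul_div_cancel₀ a hn.ne'] at hscaled
  linarith

/-- **Godsil–Newman-type bound**: the independence number satisfies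
`α ≤ (n/2) (1 - Δ/λ + sqrt((1 - Δ/λ)² + 4 α' (Δ - δ)/(n λ)))`. -/
theorem godsil_newman_type_bound {V : Type*} [Fintype V] (G : SimpleGraph V)
    (hne : ∃ v w, G.Adj v w) :
    (indepNum G : ℝ) ≤ (Fintype.card V : ℝ) / 2
      * (1 - (maxDeg G : ℝ) / lapMax G
        + Real.sqrt ((1 - (maxDeg G : ℝ) / lapMax G) ^ 2
          + 4 * (indepNum (derived G) : ℝ) * ((maxDeg G : ℝ) - (minDeg G : ℝ))
            / ((Fintype.card V : ℝ) * lapMax G))) := by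
  have : Nonempty V := let ⟨v, _⟩ := hne; ⟨v⟩
  obtain ⟨S, hS, hcard⟩ := exists_card_eq_indepNum G
  refine le_half_mul_of_mul_sub_le_mul_mul_sub (Nat.cast_pos.mpr Fintype.card_pos)
    (lapMax_pos G hne) ?_
  rw [← hcard]
  calc _ ≤ (Fintype.card V : ℝ) * ∑ v ∈ S, (deg G v : ℝ) := by
        gcongr
        exact maxDeg_mul_card_sub_le_sum_deg G hS
    _ ≤ _ := card_mul_sum_deg_le_lapMax G hS
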